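/- arXiv:math-ph/0410050 — 2 statements merged into one kernel-verified Lean document; each statement's English description precedes it below -/
import Mathlib

section
/- For every natural number m and every three times differentiable function f on I, the intertwining relation (A_m (H_m f))(s) = (H_{m+1} (A_m f))(s) holds for all s in I. -/
/-!
Both sides are expanded by the Leibniz rule. The only facts about `κ = √σ` that enter are the
ones obtained by differentiating `κ² = σ` three times (using `σ''' = 0`):
`2κκ' = σ'`, `κ'² + κκ'' = σ''/2` and `3κ'κ'' + κκ''' = 0`. Using them to eliminate `σ`, `σ'`,
`σ''` and `κ'''`, the claim becomes an identity of rational functions in `κ, κ', κ''`, `τ, τ'`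
and `f, f', f'', f'''`.
-/

open Set

noncomputable def intertwiner (κ : ℝ → ℝ) (m : ℝ) (f : ℝ → ℝ) (s : ℝ) : ℝ :=
  κ s * deriv f s - m * deriv κ s * f s

/-- The potential of `H_m` for `σ = a s² + b s + c` and `τ' = d`, so that `2 a s + b = σ'`
and `2 a = σ''`. -/
noncomputable def potential (a b d : ℝ) (σ τ : ℝ → ℝ) (m s : ℝ) : ℝ :=
  m * (m - 2) * (2 * a * s + b) ^ 2 / (4 * σ s) + m * τ s * (2 * a * s + b) / (2 * σ s)
    - m * (m - 2) * (2 * a) / 2 - m * d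

noncomputable def hamiltonian (a b d : ℝ) (σ τ : ℝ → ℝ) (m : ℝ) (f : ℝ → ℝ) (s : ℝ) : ℝ :=
  -σ s * deriv (deriv f) s - τ s * deriv f s + potential a b d σ τ m s * f s

section Calculus

variable {I : Set ℝ} {t : ℝ}

theorem IsOpen.hasDerivAt_unique_of_eqOn {g h : ℝ → ℝ} {g' h' : ℝ} (hI : IsOpen I)
    (hgh : EqOn g h I) (ht : t ∈ I) (hg : HasDerivAt g g' t) (hh : HasDerivAt h h' t) :
    g' = h' := by
  rw [← hg.deriv, ← hh.deriv]
  exact hgh.deriv hI ht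

theorem ContDiffOn.hasDerivAt_derivs {f : ℝ → ℝ} (hI : IsOpen I) (hf : ContDiffOn ℝ 3 f I)
    (ht : t ∈ I) :
    HasDerivAt f (deriv f t) t ∧ HasDerivAt (deriv f) (deriv (deriv f) t) t ∧
      HasDerivAt (deriv (deriv f)) (deriv (deriv (deriv f)) t) t := by
  have hf₁ : ContDiffOn ℝ 2 (deriv f) I := hf.deriv_of_isOpen hI (by norm_num)
  have hf₂ : ContDiffOn ℝ 1 (deriv (deriv f)) I := hf₁.deriv_of_isOpen hI (by norm_num)
  have key {g : ℝ → ℝ} {n : WithTop ℕ∞} (hg : ContDiffOn ℝ n g I) (hn : n ≠ 0) :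
      HasDerivAt g (deriv g t) t :=
    ((hg.differentiableOn hn t ht).differentiableAt (hI.mem_nhds ht)).hasDerivAt
  exact ⟨key hf (by norm_num), key hf₁ (by norm_num), key hf₂ (by norm_num)⟩

theorem hasDerivAt_quadratic {σ : ℝ → ℝ} {a b c : ℝ} (hσ : ∀ s, σ s = a * s ^ 2 + b * s + c)
    (t : ℝ) : HasDerivAt σ (2 * a * t + b) t := by
  rw [show σ = fun s => a * s ^ 2 + b * s + c from funext hσ]
  refine (((hasDerivAt_pow 2 t).const_mul a).add ((hasDerivAt_id t).const_mul b)).add_const c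
    |>.congr_deriv ?_
  ring

theorem hasDerivAt_affine {τ : ℝ → ℝ} {d e : ℝ} (hτ : ∀ s, τ s = d * s + e) (t : ℝ) :
    HasDerivAt τ d t := by
  rw [show τ = fun s => d * s + e from funext hτ]
  simpa using ((hasDerivAt_id t).const_mul d).add_const e

end Calculus

section SqrtOfQuadratic

variable {a b c : ℝ} {σ κ : ℝ → ℝ} {I : Set ℝ}

theorem contDiffOn_sqrt_quadratic {n : WithTop ℕ∞} (hσ : ∀ s, σ s = a * s ^ 2 + b * s + c)
    (hσpos : ∀ t ∈ I, 0 < σ t) : ContDiffOn ℝ n (fun t => √(σ t)) I := by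
  have hσ_smooth : ContDiff ℝ n σ := by
    rw [show σ = _ from funext hσ]
    fun_prop
  exact hσ_smooth.contDiffOn.sqrt fun t ht => (hσpos t ht).ne'

theorem deriv_relations_of_mul_self_eqOn_quadratic (hI : IsOpen I)
    (hσ : ∀ s, σ s = a * s ^ 2 + b * s + c) (hκσ : EqOn (fun t => κ t * κ t) σ I)
    (hκ : ContDiffOn ℝ 3 κ I) {t : ℝ} (ht : t ∈ I) :
    2 * κ t * deriv κ t = 2 * a * t + b ∧
      deriv κ t ^ 2 + κ t * deriv (deriv κ) t = a ∧
      3 * deriv κ t * deriv (deriv κ) t + κ t * deriv (deriv (deriv κ)) t = 0 := by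
  have jets {t} (ht : t ∈ I) := hκ.hasDerivAt_derivs hI ht
  have first : EqOn (fun t => 2 * κ t * deriv κ t) (fun t => 2 * a * t + b) I := fun t ht => by
    have := hI.hasDerivAt_unique_of_eqOn hκσ ht ((jets ht).1.mul (jets ht).1)
      (hasDerivAt_quadratic hσ t)
    linarith
  have second : EqOn (fun t => deriv κ t ^ 2 + κ t * deriv (deriv κ) t) (fun _ => a) I :=
    fun t ht => by
      have := hI.hasDerivAt_unique_of_eqOn first ht
        (((jets ht).1.const_mul 2).mul (jets ht).2.1)
        (((hasDerivAt_id t).const_mul (2 * a)).add_const b)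
      linarith
  refine ⟨first ht, second ht, ?_⟩
  have := hI.hasDerivAt_unique_of_eqOn second ht
    (((jets ht).2.1.pow 2).add ((jets ht).1.mul (jets ht).2.2)) (hasDerivAt_const t a)
  norm_num at this
  linarith

end SqrtOfQuadratic

section Operators

variable {κ f : ℝ → ℝ} {m t : ℝ}

theorem hasDerivAt_intertwiner {κ₂ f₂ : ℝ} (hκ : HasDerivAt κ (deriv κ t) t)
    (hκ' : HasDerivAt (deriv κ) κ₂ t) (hf : HasDerivAt f (deriv f t) t)
    (hf' : HasDerivAt (deriv f) f₂ t) :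
    HasDerivAt (intertwiner κ m f)
      (κ t * f₂ - (m - 1) * deriv κ t * deriv f t - m * κ₂ * f t) t := by
  have h := (hκ.mul hf').sub ((hκ'.const_mul m).mul hf)
  refine h.congr_deriv ?_
  ring

theorem hasDerivAt_deriv_intertwiner {I : Set ℝ} (hI : IsOpen I) (hκ : ContDiffOn ℝ 3 κ I)
    (hf : ContDiffOn ℝ 3 f I) (ht : t ∈ I) :
    HasDerivAt (deriv (intertwiner κ m f))
      (deriv κ t * deriv (deriv f) t + κ t * deriv (deriv (deriv f)) t
        - (m - 1) * (deriv (deriv κ) t * deriv f t + deriv κ t * deriv (deriv f) t)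
        - m * (deriv (deriv (deriv κ)) t * f t + deriv (deriv κ) t * deriv f t)) t := by
  have hκjets {t} (ht : t ∈ I) := hκ.hasDerivAt_derivs hI ht
  have hfjets {t} (ht : t ∈ I) := hf.hasDerivAt_derivs hI ht
  have hderiv : EqOn (deriv (intertwiner κ m f)) (fun t => κ t * deriv (deriv f) t
      - (m - 1) * deriv κ t * deriv f t - m * deriv (deriv κ) t * f t) I := fun t ht =>
    (hasDerivAt_intertwiner (hκjets ht).1 (hκjets ht).2.1 (hfjets ht).1 (hfjets ht).2.1).deriv
  have h := (((hκjets ht).1.mul (hfjets ht).2.2).sub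
    (((hκjets ht).2.1.const_mul (m - 1)).mul (hfjets ht).2.1)).sub
      (((hκjets ht).2.2.const_mul m).mul (hfjets ht).1)
  refine (h.congr_of_eventuallyEq (hderiv.eventuallyEq_of_mem (hI.mem_nhds ht))).congr_deriv ?_
  ring

end Operators

section Potential

variable {a b d : ℝ} {σ τ f : ℝ → ℝ} {m t : ℝ}

theorem hasDerivAt_potential (hσ : HasDerivAt σ (2 * a * t + b) t) (hτ : HasDerivAt τ d t)
    (hσt : σ t ≠ 0) :
    HasDerivAt (potential a b d σ τ m)
      (m * (m - 2) * (2 * a * t + b) * (4 * a * σ t - (2 * a * t + b) ^ 2) / (4 * σ t ^ 2)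
        + m * ((d * (2 * a * t + b) + 2 * a * τ t) * σ t - τ t * (2 * a * t + b) ^ 2)
          / (2 * σ t ^ 2)) t := by
  have hσ' : HasDerivAt (fun s => 2 * a * s + b) (2 * a) t := by
    simpa using ((hasDerivAt_id t).const_mul (2 * a)).add_const b
  have h := ((((hσ'.pow 2).const_mul (m * (m - 2))).div (hσ.const_mul 4) (by simpa)).add
    (((hτ.const_mul m).mul hσ').div (hσ.const_mul 2) (by simpa))).sub_const
      (m * (m - 2) * (2 * a) / 2) |>.sub_const (m * d)
  refine h.congr_deriv ?_
  simp only [Pi.pow_apply, Pi.mul_apply]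
  field_simp
  ring

theorem hasDerivAt_hamiltonian {f₃ : ℝ} (hσ : HasDerivAt σ (2 * a * t + b) t)
    (hτ : HasDerivAt τ d t) (hσt : σ t ≠ 0) (hf : HasDerivAt f (deriv f t) t)
    (hf' : HasDerivAt (deriv f) (deriv (deriv f) t) t)
    (hf'' : HasDerivAt (deriv (deriv f)) f₃ t) :
    HasDerivAt (hamiltonian a b d σ τ m f)
      (-(2 * a * t + b) * deriv (deriv f) t - σ t * f₃ - d * deriv f t
        - τ t * deriv (deriv f) t
        + (m * (m - 2) * (2 * a * t + b) * (4 * a * σ t - (2 * a * t + b) ^ 2) / (4 * σ t ^ 2)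
          + m * ((d * (2 * a * t + b) + 2 * a * τ t) * σ t - τ t * (2 * a * t + b) ^ 2)
            / (2 * σ t ^ 2)) * f t
        + potential a b d σ τ m t * deriv f t) t := by
  have h := ((hσ.neg.mul hf'').sub (hτ.mul hf')).add
    ((hasDerivAt_potential (m := m) hσ hτ hσt).mul hf)
  refine h.congr_deriv ?_
  simp only [Pi.neg_apply]
  ring

end Potential

theorem intertwining_Am_Hm_general
    (a b c d e : ℝ) (σ τ : ℝ → ℝ)
    (hσ : ∀ s, σ s = a * s ^ 2 + b * s + c)
    (hτ : ∀ s, τ s = d * s + e)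
    (I : Set ℝ) (hI : IsOpen I)
    (hσpos : ∀ s ∈ I, 0 < σ s)
    (κ : ℝ → ℝ) (hκ : ∀ s, κ s = Real.sqrt (σ s))
    (m : ℕ) (f : ℝ → ℝ) (hf : ContDiffOn ℝ 3 f I)
    (Hf : ℝ → ℝ)
    (hHf : ∀ s, Hf s = -σ s * deriv (deriv f) s - τ s * deriv f s
        + ((m : ℝ) * ((m : ℝ) - 2) * (2 * a * s + b) ^ 2 / (4 * σ s)
            + (m : ℝ) * τ s * (2 * a * s + b) / (2 * σ s)
            - (m : ℝ) * ((m : ℝ) - 2) * (2 * a) / 2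
            - (m : ℝ) * d) * f s)
    (Af : ℝ → ℝ) (hAf : ∀ s, Af s = κ s * deriv f s - (m : ℝ) * deriv κ s * f s) :
    ∀ s ∈ I,
      κ s * deriv Hf s - (m : ℝ) * deriv κ s * Hf s
      = -σ s * deriv (deriv Af) s - τ s * deriv Af s
          + (((m : ℝ) + 1) * (((m : ℝ) + 1) - 2) * (2 * a * s + b) ^ 2 / (4 * σ s)
              + ((m : ℝ) + 1) * τ s * (2 * a * s + b) / (2 * σ s)
              - ((m : ℝ) + 1) * (((m : ℝ) + 1) - 2) * (2 * a) / 2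
              - ((m : ℝ) + 1) * d) * Af s := by
  obtain rfl : Hf = hamiltonian a b d σ τ m f := funext hHf
  obtain rfl : Af = intertwiner κ m f := funext hAf
  intro s hs
  have hκ_smooth : ContDiffOn ℝ 3 κ I := funext hκ ▸ contDiffOn_sqrt_quadratic hσ hσpos
  have hκσ : EqOn (fun t => κ t * κ t) σ I := fun t ht => by
    simp only [hκ, Real.mul_self_sqrt (hσpos t ht).le]
  obtain ⟨hκ₁, hκ₂, hκ₃⟩ := deriv_relations_of_mul_self_eqOn_quadratic hI hσ hκσ hκ_smooth hs
  have hfjets := hf.hasDerivAt_derivs hI hs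
  have hκjets := hκ_smooth.hasDerivAt_derivs hI hs
  rw [(hasDerivAt_hamiltonian (hasDerivAt_quadratic hσ s) (hasDerivAt_affine hτ s)
      (hσpos s hs).ne' hfjets.1 hfjets.2.1 hfjets.2.2).deriv,
    (hasDerivAt_deriv_intertwiner hI hκ_smooth hf hs).deriv,
    (hasDerivAt_intertwiner hκjets.1 hκjets.2.1 hfjets.1 hfjets.2.1).deriv]
  simp only [hamiltonian, intertwiner, potential]
  have hκs : κ s ≠ 0 := by rw [hκ]; exact (Real.sqrt_pos.mpr (hσpos s hs)).ne'
  have hκ₃' : deriv (deriv (deriv κ)) s = -(3 * deriv κ s * deriv (deriv κ) s) / κ s := by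
    field_simp
    linarith
  rw [hκ₃', ← hκσ hs, ← hκ₁, ← hκ₂]
  field_simp
  ring

/-- For every `m : ℕ` and every three times differentiable
function `f` on the nonempty open interval `I` (on which `σ > 0`), the
intertwining relation `A_m (H_m f) = H_{m+1} (A_m f)` holds on `I`, where
`A_m f = κ f' - m κ' f` and
`H_m f = -σ f'' - τ f' + [m(m-2)σ'²/(4σ) + mτσ'/(2σ) - m(m-2)σ''/2 - mτ'] f`. -/
theorem intertwining_Am_Hm
    (a b c d e : ℝ) (σ τ : ℝ → ℝ)
    (hσ : ∀ s, σ s = a * s ^ 2 + b * s + c)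
    (hτ : ∀ s, τ s = d * s + e)
    (I : Set ℝ) (hI : IsOpen I) (hIne : I.Nonempty) (hIconn : I.OrdConnected)
    (hσpos : ∀ s ∈ I, 0 < σ s)
    (κ : ℝ → ℝ) (hκ : ∀ s, κ s = Real.sqrt (σ s))
    (m : ℕ) (f : ℝ → ℝ) (hf : ContDiffOn ℝ 3 f I)
    (Hf : ℝ → ℝ)
    (hHf : ∀ s, Hf s = -σ s * deriv (deriv f) s - τ s * deriv f s
        + ((m : ℝ) * ((m : ℝ) - 2) * (2 * a * s + b) ^ 2 / (4 * σ s)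
            + (m : ℝ) * τ s * (2 * a * s + b) / (2 * σ s)
            - (m : ℝ) * ((m : ℝ) - 2) * (2 * a) / 2
            - (m : ℝ) * d) * f s)
    (Af : ℝ → ℝ) (hAf : ∀ s, Af s = κ s * deriv f s - (m : ℝ) * deriv κ s * f s) :
    ∀ s ∈ I,
      κ s * deriv Hf s - (m : ℝ) * deriv κ s * Hf s
      = -σ s * deriv (deriv Af) s - τ s * deriv Af s
          + (((m : ℝ) + 1) * (((m : ℝ) + 1) - 2) * (2 * a * s + b) ^ 2 / (4 * σ s)
              + ((m : ℝ) + 1) * τ s * (2 * a * s + b) / (2 * σ s)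
              - ((m : ℝ) + 1) * (((m : ℝ) + 1) - 2) * (2 * a) / 2
              - ((m : ℝ) + 1) * d) * Af s :=
  intertwining_Am_Hm_general a b c d e σ τ hσ hτ I hI hσpos κ hκ m f hf Hf hHf Af hAf
end

section
/- Let α, β be real with α < β < −α, let ρ(s) = (1+s)^{−(α−β)/2−1}(1−s)^{−(α+β)/2−1} for s ∈ (−1,1), for l ∈ ℕ define Ψ_l(s) = (1/ρ(s)) · (d/ds)^l [(1−s²)^l ρ(s)], for m ≤ l define Ψ_{l,m}(s) = (1−s²)^{m/2} · (d/ds)^m Ψ_l(s), and set λ_j = j(j−1−α). Then for all natural numbers m < l, the functions s ↦ Ψ_{l,m}(s)² ρ(s) and s ↦ Ψ_{l,m+1}(s)² ρ(s) are integrable on (−1,1) and ∫_{−1}^{1} Ψ_{l,m+1}(s)² ρ(s) ds = (λ_l − λ_m) · ∫_{−1}^{1} Ψ_{l,m}(s)² ρ(s) ds; that is, ‖Ψ_{l,m+1}‖ = √(λ_l − λ_m) · ‖Ψ_{l,m}‖ in the weighted L² norm. -/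
/-!
Write `σ = 1 - s²` and `ρ = (1 + s)^a (1 - s)^b`, so that `a, b > -1` and `(σρ)' = τρ` with
`τ = αs + β`. By this Pearson equation, `(σ^(r+1) ρ p)' = σ^r ρ (σp' + (τ + rσ')p)` for every
polynomial `p`; iterating it shows that `(d/ds)^k (σ^l ρ) = σ^(l-k) ρ Q_k` for explicit
polynomials `Q_k`, so `Ψ_l = Q_l` is a polynomial. The derivatives of `Q_{k+1}` are multiples
of `Q_k`, which makes `y = Q_l^(m)` solve `σy'' + (τ + mσ')y' + (λ_l - λ_m)y = 0`. Multiplying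
by `y` gives `(σ^(m+1) ρ y y')' = σ^m ρ (σ y'² - (λ_l - λ_m) y²)`, and the left side integrates
to zero over `(-1, 1)` because `σ^(m+1) ρ = (1 + s)^(a+m+1) (1 - s)^(b+m+1)` vanishes at `±1`.
-/

open MeasureTheory Polynomial Set Filter Topology

section Hypergeometric

variable {R : Type*} [CommRing R] (σ τ : R[X])

/-- `(σ^(r+1) ρ p)' = σ^r ρ · pearsonDeriv σ τ r p` whenever `(σρ)' = τρ`. -/
noncomputable def pearsonDeriv (r : R) (p : R[X]) : R[X] :=
  σ * derivative p + (τ + C r * derivative σ) * p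

/-- `(d/ds)^k (σ^l ρ) = σ^(l-k) ρ · rodriguesFactor σ τ l k` for `k ≤ l`. The recursion also
makes sense for `k > l`, and `k = l + 1` is what yields the differential equation of
`rodriguesPoly`. -/
noncomputable def rodriguesFactor (l : ℕ) : ℕ → R[X]
  | 0 => 1
  | k + 1 => pearsonDeriv σ τ ((l : R) - k - 1) (rodriguesFactor l k)

noncomputable def rodriguesPoly (l : ℕ) : R[X] := rodriguesFactor σ τ l l

/-- `λ_j = -j(j-1)σ''/2 - jτ'` for `σ'' = 2κ`, `τ' = ν`. -/
def hypergeometricEigenvalue (κ ν : R) (j : ℕ) : R := -((j : R) * (j - 1) * κ + j * ν)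

variable {σ τ} {κ ν : R}
  (hσ : derivative (derivative σ) = C (2 * κ)) (hτ : derivative τ = C ν)
include hσ hτ

theorem derivative_rodriguesFactor_succ (l k : ℕ) :
    derivative (rodriguesFactor σ τ l (k + 1))
      = C (((k : R) + 1) * (ν + (2 * l - k - 2) * κ)) * rodriguesFactor σ τ l k := by
  induction k with
  | zero =>
    simp only [rodriguesFactor, pearsonDeriv, derivative_one, mul_zero, zero_add, mul_one,
      derivative_add, derivative_mul, derivative_C, zero_mul, hσ, hτ]
    simp only [map_add, map_mul, map_sub, map_natCast, map_ofNat, map_one, Nat.cast_zero,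
      map_zero]
    ring
  | succ k ih =>
    rw [rodriguesFactor, pearsonDeriv]
    simp only [derivative_mul, derivative_add, derivative_C, zero_mul, zero_add, ih, hσ, hτ]
    rw [rodriguesFactor, pearsonDeriv]
    simp only [map_add, map_mul, map_sub, map_natCast, map_ofNat, map_one, Nat.cast_add,
      Nat.cast_one]
    ring

theorem pearsonDeriv_iterate_derivative_rodriguesPoly (l m : ℕ) :
    pearsonDeriv σ τ m (derivative^[m + 1] (rodriguesPoly σ τ l))
      + C (hypergeometricEigenvalue κ ν l - hypergeometricEigenvalue κ ν m)
        * derivative^[m] (rodriguesPoly σ τ l) = 0 := by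
  induction m with
  | zero =>
    have h := derivative_rodriguesFactor_succ hσ hτ l l
    rw [rodriguesFactor, pearsonDeriv] at h
    simp only [derivative_mul, derivative_add, derivative_C, zero_mul, zero_add, hσ, hτ] at h
    simp only [pearsonDeriv, rodriguesPoly, hypergeometricEigenvalue, zero_add,
      Function.iterate_one, Function.iterate_zero, id_eq, Nat.cast_zero]
    simp only [map_add, map_mul, map_sub, map_natCast, map_ofNat, map_one, map_neg, map_zero]
      at h ⊢
    linear_combination h
  | succ m ih =>
    have h := congrArg derivative ih
    simp only [pearsonDeriv, derivative_mul, derivative_add, derivative_C, zero_mul, zero_add, hσ,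
      hτ, derivative_zero, ← Function.iterate_succ_apply' derivative] at h
    simp only [pearsonDeriv, hypergeometricEigenvalue, Function.iterate_succ_apply'] at h ⊢
    simp only [map_add, map_mul, map_sub, map_natCast, map_ofNat, map_one, map_neg, Nat.cast_add,
      Nat.cast_one] at h ⊢
    linear_combination h

theorem pearsonDeriv_iterate_derivative_rodriguesPoly_mul (l m : ℕ) :
    pearsonDeriv σ τ m
        (derivative^[m] (rodriguesPoly σ τ l) * derivative^[m + 1] (rodriguesPoly σ τ l))
      = σ * derivative^[m + 1] (rodriguesPoly σ τ l) ^ 2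
        - C (hypergeometricEigenvalue κ ν l - hypergeometricEigenvalue κ ν m)
          * derivative^[m] (rodriguesPoly σ τ l) ^ 2 := by
  have h := pearsonDeriv_iterate_derivative_rodriguesPoly hσ hτ l m
  simp only [pearsonDeriv, derivative_mul, ← Function.iterate_succ_apply' derivative] at h ⊢
  linear_combination derivative^[m] (rodriguesPoly σ τ l) * h

end Hypergeometric

theorem Polynomial.mul_derivative_pow {R : Type*} [CommRing R] (p : R[X]) (i : ℕ) :
    p * derivative (p ^ i) = C (i : R) * p ^ i * derivative p := by
  cases i with
  | zero => simp
  | succ n => rw [derivative_pow_succ]; push_cast; ring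

theorem Polynomial.iteratedDeriv_eval (p : ℝ[X]) (k : ℕ) :
    iteratedDeriv k (fun t => p.eval t) = fun t => (derivative^[k] p).eval t := by
  induction k generalizing p with
  | zero => simp
  | succ k ih =>
    have hd : _root_.deriv (fun t => p.eval t) = fun t => (derivative p).eval t := by
      ext t; exact p.deriv
    rw [iteratedDeriv_succ', hd, ih, Function.iterate_succ_apply]

theorem Real.rpow_natCast_div_two_sq {x : ℝ} (hx : 0 ≤ x) (k : ℕ) :
    (x ^ ((k : ℝ) / 2)) ^ 2 = x ^ k := by
  rw [← Real.rpow_mul_natCast hx, Nat.cast_ofNat, div_mul_cancel₀ _ two_ne_zero,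
    Real.rpow_natCast]

section Pearson

variable {σ τ : ℝ[X]} {ρ : ℝ → ℝ} {s : ℝ}

theorem HasDerivAt.pow_succ_mul_mul_eval
    (hρ : HasDerivAt (fun t => σ.eval t * ρ t) (τ.eval s * ρ s) s) (p : ℝ[X]) (i : ℕ) :
    HasDerivAt (fun t => σ.eval t ^ (i + 1) * ρ t * p.eval t)
      (σ.eval s ^ i * ρ s * (pearsonDeriv σ τ i p).eval s) s := by
  have hf : (fun t => σ.eval t ^ (i + 1) * ρ t * p.eval t)
      = fun t => (σ ^ i * p).eval t * (σ.eval t * ρ t) := by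
    funext t; simp only [eval_mul, eval_pow]; ring
  have hσi := congrArg (eval s) (σ.mul_derivative_pow i)
  simp only [eval_mul, eval_pow, eval_C] at hσi
  rw [hf]
  refine (((σ ^ i * p).hasDerivAt s).mul hρ).congr_deriv ?_
  simp only [pearsonDeriv, derivative_mul, eval_mul, eval_add, eval_pow, eval_C]
  linear_combination (p.eval s * ρ s) * hσi

theorem iteratedDeriv_pow_mul_eq_rodriguesFactor {U : Set ℝ} (hU : IsOpen U)
    (hρ : ∀ s ∈ U, HasDerivAt (fun t => σ.eval t * ρ t) (τ.eval s * ρ s) s) {l k : ℕ}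
    (hk : k ≤ l) (hs : s ∈ U) :
    iteratedDeriv k (fun t => σ.eval t ^ l * ρ t) s
      = σ.eval s ^ (l - k) * ρ s * (rodriguesFactor σ τ l k).eval s := by
  induction k generalizing s with
  | zero => simp [rodriguesFactor]
  | succ k ih =>
    have hloc : iteratedDeriv k (fun t => σ.eval t ^ l * ρ t)
        =ᶠ[𝓝 s]
          fun t => σ.eval t ^ (l - k - 1 + 1) * ρ t * (rodriguesFactor σ τ l k).eval t := by
      filter_upwards [hU.mem_nhds hs] with t ht
      rw [ih (by omega) ht, Nat.sub_add_cancel (by omega)]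
    rw [iteratedDeriv_succ, hloc.deriv_eq, ((hρ s hs).pow_succ_mul_mul_eval _ _).deriv,
      rodriguesFactor, Nat.cast_sub (by omega : 1 ≤ l - k), Nat.cast_sub (by omega : k ≤ l)]
    push_cast
    rfl

end Pearson

noncomputable def jacobiWeight (a b s : ℝ) : ℝ := (1 + s) ^ a * (1 - s) ^ b

/-- In the notation `τ = αs + β` of the hypergeometric equation, `α = -(a + b + 2)` and
`β = a - b`. -/
noncomputable def jacobiTau (a b : ℝ) : ℝ[X] := C (a - b) - C (a + b + 2) * X

section Jacobi

variable {a b s : ℝ}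

theorem jacobiWeight_pos (hs : s ∈ Ioo (-1 : ℝ) 1) : 0 < jacobiWeight a b s :=
  mul_pos (Real.rpow_pos_of_pos (by linarith [hs.1]) _)
    (Real.rpow_pos_of_pos (by linarith [hs.2]) _)

theorem one_sub_sq_pow_mul_jacobiWeight (hs : s ∈ Ioo (-1 : ℝ) 1) (j : ℕ) :
    (1 - s ^ 2) ^ j * jacobiWeight a b s = jacobiWeight (a + j) (b + j) s := by
  have h₁ : 0 < 1 + s := by linarith [hs.1]
  have h₂ : 0 < 1 - s := by linarith [hs.2]
  rw [jacobiWeight, jacobiWeight, Real.rpow_add h₁, Real.rpow_add h₂, Real.rpow_natCast,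
    Real.rpow_natCast, show 1 - s ^ 2 = (1 + s) * (1 - s) by ring, mul_pow]
  ring

theorem continuous_jacobiWeight (ha : 0 ≤ a) (hb : 0 ≤ b) : Continuous (jacobiWeight a b) :=
  ((Real.continuous_rpow_const ha).comp (continuous_const.add continuous_id)).mul
    ((Real.continuous_rpow_const hb).comp (continuous_const.sub continuous_id))

theorem jacobiWeight_neg_one (ha : a ≠ 0) : jacobiWeight a b (-1) = 0 := by
  simp [jacobiWeight, Real.zero_rpow ha]

theorem jacobiWeight_one (hb : b ≠ 0) : jacobiWeight a b 1 = 0 := by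
  simp [jacobiWeight, Real.zero_rpow hb]

theorem hasDerivAt_jacobiWeight (hs : s ∈ Ioo (-1 : ℝ) 1) :
    HasDerivAt (jacobiWeight a b) ((a - b - (a + b) * s) * jacobiWeight (a - 1) (b - 1) s) s := by
  have h₁ : 0 < 1 + s := by linarith [hs.1]
  have h₂ : 0 < 1 - s := by linarith [hs.2]
  have hA : HasDerivAt (fun t => (1 + t) ^ a) (a * (1 + s) ^ (a - 1)) s := by
    simpa using ((hasDerivAt_id s).const_add 1).rpow_const (p := a) (Or.inl h₁.ne')
  have hB : HasDerivAt (fun t => (1 - t) ^ b) (-(b * (1 - s) ^ (b - 1))) s := by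
    simpa using ((hasDerivAt_id s).const_sub 1).rpow_const (p := b) (Or.inl h₂.ne')
  refine (hA.mul hB).congr_deriv ?_
  rw [jacobiWeight, Real.rpow_sub_one h₁.ne', Real.rpow_sub_one h₂.ne']
  field_simp
  ring

theorem hasDerivAt_one_sub_sq_mul_jacobiWeight (hs : s ∈ Ioo (-1 : ℝ) 1) :
    HasDerivAt (fun t => (1 - X ^ 2 : ℝ[X]).eval t * jacobiWeight a b t)
      ((jacobiTau a b).eval s * jacobiWeight a b s) s := by
  have hloc : (fun t => (1 - X ^ 2 : ℝ[X]).eval t * jacobiWeight a b t)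
      =ᶠ[𝓝 s] jacobiWeight (a + 1) (b + 1) := by
    filter_upwards [isOpen_Ioo.mem_nhds hs] with t ht
    simpa using one_sub_sq_pow_mul_jacobiWeight (a := a) (b := b) ht 1
  refine (hasDerivAt_jacobiWeight hs).congr_of_eventuallyEq hloc |>.congr_deriv ?_
  rw [add_sub_cancel_right, add_sub_cancel_right]
  simp only [jacobiTau, eval_sub, eval_C, eval_mul, eval_X]
  ring

theorem integrableOn_jacobiWeight (ha : -1 < a) (hb : -1 < b) :
    IntegrableOn (jacobiWeight a b) (Ioo (-1) 1) := by
  have hleft : IntegrableOn (fun s : ℝ => (1 + s) ^ a) (Icc (-1) 0) := by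
    rw [← intervalIntegrable_iff_integrableOn_Icc_of_le (by norm_num)]
    simpa [add_comm] using
      (intervalIntegral.intervalIntegrable_rpow' (a := 0) (b := 1) ha).comp_add_right 1
  have hright : IntegrableOn (fun s : ℝ => (1 - s) ^ b) (Icc 0 1) := by
    rw [← intervalIntegrable_iff_integrableOn_Icc_of_le (by norm_num)]
    simpa using
      ((intervalIntegral.intervalIntegrable_rpow' (a := 0) (b := 1) hb).comp_sub_left 1).symm
  have h₁ : IntegrableOn (jacobiWeight a b) (Icc (-1) 0) :=
    hleft.mul_continuousOn (fun s hs => (ContinuousAt.rpow_const (by fun_prop)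
      (Or.inl (by linarith [hs.2] : (1 : ℝ) - s ≠ 0))).continuousWithinAt) isCompact_Icc
  have h₂ : IntegrableOn (jacobiWeight a b) (Icc 0 1) :=
    hright.continuousOn_mul (fun s hs => (ContinuousAt.rpow_const (by fun_prop)
      (Or.inl (by linarith [hs.1] : (1 : ℝ) + s ≠ 0))).continuousWithinAt) isCompact_Icc
  refine (h₁.union h₂).mono_set ?_
  rw [Icc_union_Icc_eq_Icc (by norm_num) (by norm_num)]
  exact Ioo_subset_Icc_self

theorem integrableOn_eval_mul_jacobiWeight (ha : -1 < a) (hb : -1 < b) (p : ℝ[X]) :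
    IntegrableOn (fun s => p.eval s * jacobiWeight a b s) (Ioo (-1) 1) :=
  (integrableOn_jacobiWeight ha hb).continuousOn_mul_of_subset p.continuous.continuousOn
    isCompact_Icc measurableSet_Ioo Ioo_subset_Icc_self

theorem iteratedDeriv_one_sub_sq_pow_mul_jacobiWeight (hs : s ∈ Ioo (-1 : ℝ) 1) (l : ℕ) :
    iteratedDeriv l (fun t => (1 - t ^ 2) ^ l * jacobiWeight a b t) s
      = jacobiWeight a b s * (rodriguesPoly (1 - X ^ 2) (jacobiTau a b) l).eval s := by
  simpa [rodriguesPoly] using iteratedDeriv_pow_mul_eq_rodriguesFactor (l := l) isOpen_Ioo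
    (fun t ht => hasDerivAt_one_sub_sq_mul_jacobiWeight ht) le_rfl hs

theorem integral_one_sub_sq_pow_mul_pearsonDeriv_mul_jacobiWeight_eq_zero (ha : -1 < a)
    (hb : -1 < b) (p : ℝ[X]) (m : ℕ) :
    ∫ s in Ioo (-1) 1,
      ((1 - X ^ 2) ^ m * pearsonDeriv (1 - X ^ 2) (jacobiTau a b) m p).eval s * jacobiWeight a b s
      = 0 := by
  have hm : (1 : ℝ) ≤ (m + 1 : ℕ) := by exact_mod_cast Nat.le_add_left 1 m
  -- `F = σ^(m+1) ρ p` on `(-1, 1)`, continuously extended by `0` to `±1`.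
  set F := fun s => jacobiWeight (a + (m + 1 : ℕ)) (b + (m + 1 : ℕ)) s * p.eval s
  have hF : Continuous F :=
    (continuous_jacobiWeight (by linarith) (by linarith)).mul p.continuous
  have hderiv : ∀ s ∈ Ioo (-1 : ℝ) 1, HasDerivAt F (((1 - X ^ 2) ^ m
      * pearsonDeriv (1 - X ^ 2) (jacobiTau a b) m p).eval s * jacobiWeight a b s) s := by
    intro s hs
    have hloc : (fun t => (1 - X ^ 2 : ℝ[X]).eval t ^ (m + 1) * jacobiWeight a b t * p.eval t)
        =ᶠ[𝓝 s] F := by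
      filter_upwards [isOpen_Ioo.mem_nhds hs] with t ht
      simp only [F, ← one_sub_sq_pow_mul_jacobiWeight ht, eval_sub, eval_one, eval_pow, eval_X]
    refine (((hasDerivAt_one_sub_sq_mul_jacobiWeight hs).pow_succ_mul_mul_eval p m)
      |>.congr_of_eventuallyEq hloc.symm).congr_deriv ?_
    simp only [eval_mul, eval_pow]
    ring
  have hint := (intervalIntegrable_iff_integrableOn_Ioo_of_le (by norm_num)).mpr
    (integrableOn_eval_mul_jacobiWeight ha hb
      ((1 - X ^ 2) ^ m * pearsonDeriv (1 - X ^ 2) (jacobiTau a b) m p))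
  rw [← integral_Ioc_eq_integral_Ioo, ← intervalIntegral.integral_of_le (by norm_num),
    intervalIntegral.integral_eq_sub_of_hasDerivAt_of_le (by norm_num) hF.continuousOn hderiv hint]
  simp only [F]
  rw [jacobiWeight_one (by linarith), jacobiWeight_neg_one (by linarith)]
  ring

theorem integral_iterate_derivative_rodriguesPoly_sq_mul_jacobiWeight (ha : -1 < a)
    (hb : -1 < b) (l m : ℕ) :
    ∫ s in Ioo (-1) 1, ((1 - X ^ 2) ^ (m + 1)
        * derivative^[m + 1] (rodriguesPoly (1 - X ^ 2) (jacobiTau a b) l) ^ 2).eval s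
        * jacobiWeight a b s
      = (hypergeometricEigenvalue (-1) (-(a + b + 2)) l
          - hypergeometricEigenvalue (-1) (-(a + b + 2)) m)
        * ∫ s in Ioo (-1) 1, ((1 - X ^ 2) ^ m
            * derivative^[m] (rodriguesPoly (1 - X ^ 2) (jacobiTau a b) l) ^ 2).eval s
            * jacobiWeight a b s := by
  have hσ : derivative (derivative (1 - X ^ 2 : ℝ[X])) = C (2 * -1) := by
    simp only [derivative_sub, derivative_one, derivative_X_pow, zero_sub, derivative_neg]
    simp
  have hτ : derivative (jacobiTau a b) = C (-(a + b + 2)) := by simp [jacobiTau]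
  have h := integral_one_sub_sq_pow_mul_pearsonDeriv_mul_jacobiWeight_eq_zero ha hb
    (derivative^[m] (rodriguesPoly (1 - X ^ 2) (jacobiTau a b) l)
      * derivative^[m + 1] (rodriguesPoly (1 - X ^ 2) (jacobiTau a b) l)) m
  rw [pearsonDeriv_iterate_derivative_rodriguesPoly_mul hσ hτ] at h
  rw [← sub_eq_zero, ← integral_const_mul, ← integral_sub
    (integrableOn_eval_mul_jacobiWeight ha hb _)
    ((integrableOn_eval_mul_jacobiWeight ha hb _).const_mul _)]
  refine (setIntegral_congr_fun measurableSet_Ioo fun s _ => ?_).trans h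
  simp only [eval_mul, eval_sub, eval_pow, eval_C]
  ring

end Jacobi

theorem norm_relation_associated_functions_jacobi_general
    (α β : ℝ) (hαβ : α < β) (hβα : β < -α)
    (ρ : ℝ → ℝ)
    (hρ : ∀ s : ℝ, s ∈ Set.Ioo (-1 : ℝ) 1 →
      ρ s = (1 + s) ^ (-(α - β) / 2 - 1) * (1 - s) ^ (-(α + β) / 2 - 1))
    (Ψ : ℕ → ℝ → ℝ)
    (hΨ : ∀ (l : ℕ) (s : ℝ), s ∈ Set.Ioo (-1 : ℝ) 1 →
      Ψ l s = (1 / ρ s) * iteratedDeriv l (fun t => (1 - t ^ 2) ^ l * ρ t) s)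
    (Ψa : ℕ → ℕ → ℝ → ℝ)
    (hΨa : ∀ (l m : ℕ) (s : ℝ), s ∈ Set.Ioo (-1 : ℝ) 1 →
      Ψa l m s = (1 - s ^ 2) ^ ((m : ℝ) / 2) * iteratedDeriv m (Ψ l) s)
    (lam : ℕ → ℝ) (hlam : ∀ j : ℕ, lam j = (j : ℝ) * ((j : ℝ) - 1 - α))
    (m l : ℕ) :
    IntegrableOn (fun s => Ψa l m s ^ 2 * ρ s) (Set.Ioo (-1 : ℝ) 1) ∧
    IntegrableOn (fun s => Ψa l (m + 1) s ^ 2 * ρ s) (Set.Ioo (-1 : ℝ) 1) ∧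
      ∫ s in Set.Ioo (-1 : ℝ) 1, Ψa l (m + 1) s ^ 2 * ρ s
        = (lam l - lam m) * ∫ s in Set.Ioo (-1 : ℝ) 1, Ψa l m s ^ 2 * ρ s := by
  set a := -(α - β) / 2 - 1
  set b := -(α + β) / 2 - 1
  have ha : -1 < a := by simp only [a]; linarith
  have hb : -1 < b := by simp only [b]; linarith
  set P := rodriguesPoly (1 - X ^ 2) (jacobiTau a b) l
  have hρw : EqOn ρ (jacobiWeight a b) (Ioo (-1) 1) := hρ
  have hΨl : EqOn (Ψ l) (fun s => P.eval s) (Ioo (-1) 1) := by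
    intro s hs
    have hloc : EqOn (fun t => (1 - t ^ 2) ^ l * ρ t)
        (fun t => (1 - t ^ 2) ^ l * jacobiWeight a b t) (Ioo (-1) 1) :=
      fun t ht => by simp only [hρw ht]
    rw [hΨ l s hs, hloc.iteratedDeriv_of_isOpen isOpen_Ioo l hs,
      iteratedDeriv_one_sub_sq_pow_mul_jacobiWeight hs, hρw hs, one_div,
      inv_mul_cancel_left₀ (jacobiWeight_pos hs).ne']
  have hsq : ∀ k, EqOn (fun s => Ψa l k s ^ 2 * ρ s)
      (fun s => ((1 - X ^ 2) ^ k * derivative^[k] P ^ 2).eval s * jacobiWeight a b s)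
      (Ioo (-1) 1) := by
    intro k s hs
    have h0 : 0 ≤ 1 - s ^ 2 := by nlinarith [hs.1, hs.2]
    simp only [hΨa l k s hs, hΨl.iteratedDeriv_of_isOpen isOpen_Ioo k hs, iteratedDeriv_eval,
      hρw hs, mul_pow, Real.rpow_natCast_div_two_sq h0, eval_mul, eval_pow, eval_sub, eval_one,
      eval_X]
  have hint : ∀ k, IntegrableOn (fun s => Ψa l k s ^ 2 * ρ s) (Ioo (-1) 1) := fun k =>
    (integrableOn_eval_mul_jacobiWeight ha hb _).congr_fun (hsq k).symm measurableSet_Ioo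
  refine ⟨hint m, hint (m + 1), ?_⟩
  rw [setIntegral_congr_fun measurableSet_Ioo (hsq _),
    setIntegral_congr_fun measurableSet_Ioo (hsq _),
    integral_iterate_derivative_rodriguesPoly_sq_mul_jacobiWeight ha hb, hlam, hlam]
  simp only [hypergeometricEigenvalue, a, b]
  ring

/-- For `α < β < -α`, the weight
`ρ(s) = (1+s)^{-(α-β)/2-1}(1-s)^{-(α+β)/2-1}` on `(-1,1)` (case
`σ(s) = 1-s²`), `Ψ_l(s) = (1/ρ(s)) (d/ds)^l [(1-s²)^l ρ(s)]`,
`Ψ_{l,m}(s) = (1-s²)^{m/2} (d/ds)^m Ψ_l(s)` and `λ_j = j(j-1-α)`,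
for all `m < l` the functions `s ↦ Ψ_{l,m}(s)² ρ(s)` and
`s ↦ Ψ_{l,m+1}(s)² ρ(s)` are integrable on `(-1,1)` and
`∫ Ψ_{l,m+1}² ρ = (λ_l - λ_m) ∫ Ψ_{l,m}² ρ`, i.e.
`‖Ψ_{l,m+1}‖ = √(λ_l - λ_m) ‖Ψ_{l,m}‖` in the weighted L² norm. -/
theorem norm_relation_associated_functions_jacobi
    (α β : ℝ) (hαβ : α < β) (hβα : β < -α)
    (ρ : ℝ → ℝ)
    (hρ : ∀ s : ℝ, s ∈ Set.Ioo (-1 : ℝ) 1 →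
      ρ s = (1 + s) ^ (-(α - β) / 2 - 1) * (1 - s) ^ (-(α + β) / 2 - 1))
    (Ψ : ℕ → ℝ → ℝ)
    (hΨ : ∀ (l : ℕ) (s : ℝ), s ∈ Set.Ioo (-1 : ℝ) 1 →
      Ψ l s = (1 / ρ s) * iteratedDeriv l (fun t => (1 - t ^ 2) ^ l * ρ t) s)
    (Ψa : ℕ → ℕ → ℝ → ℝ)
    (hΨa : ∀ (l m : ℕ) (s : ℝ), s ∈ Set.Ioo (-1 : ℝ) 1 →
      Ψa l m s = (1 - s ^ 2) ^ ((m : ℝ) / 2) * iteratedDeriv m (Ψ l) s)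
    (lam : ℕ → ℝ) (hlam : ∀ j : ℕ, lam j = (j : ℝ) * ((j : ℝ) - 1 - α))
    (m l : ℕ) (hml : m < l) :
    IntegrableOn (fun s => Ψa l m s ^ 2 * ρ s) (Set.Ioo (-1 : ℝ) 1) ∧
    IntegrableOn (fun s => Ψa l (m + 1) s ^ 2 * ρ s) (Set.Ioo (-1 : ℝ) 1) ∧
      ∫ s in Set.Ioo (-1 : ℝ) 1, Ψa l (m + 1) s ^ 2 * ρ s
        = (lam l - lam m) * ∫ s in Set.Ioo (-1 : ℝ) 1, Ψa l m s ^ 2 * ρ s :=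
  norm_relation_associated_functions_jacobi_general α β hαβ hβα ρ hρ Ψ hΨ Ψa hΨa lam hlam m l
end
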